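/- arXiv:math/0502581 — 7 statements merged into one kernel-verified Lean document; each statement's English description precedes it below -/
import Mathlib

section
/- Under Assumption 1.1 there exists a constant K_τ > 0 such that for all sufficiently large x, x^{2-τ-K_τ(log x)^{γ-1}} ≤ 1 - G(x) ≤ x^{2-τ+K_τ(log x)^{γ-1}}. -/
/-!
With `n = ⌊x⌋ + 1`, summation by parts gives
`μ (1 - G x) = ∑_{j > n} j f_j = (n + 1) (1 - F n) + ∑_{m > n} (1 - F m)`.
The first term alone gives the lower bound. For the upper bound, once `C (log n)^(γ-1) ≤ (τ-2)/2`
every tail `1 - F m` with `m ≥ n` is at most `m^(-β)` for the single exponent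
`β = τ - 1 - C (log n)^(γ-1) > 1`, and comparison with `∫_n^∞ t^(-β) dt` bounds the sum by
`n^(1-β) / (β - 1)`. Finally, passing from `n` to `x ≤ n ≤ 2x` and absorbing the constant factors
costs only a bounded multiple of `(log x)^γ ≥ 1` in the exponent.
-/

open Real Finset Filter
open scoped ENNReal

theorem rpow_add_mul_log_rpow_eq_exp {x : ℝ} (hx : 1 < x) (c d γ : ℝ) :
    x ^ (c + d * log x ^ (γ - 1)) = exp (c * log x + d * log x ^ γ) := by
  have hL : log x ≠ 0 := (log_pos hx).ne'
  rw [rpow_def_of_pos (by linarith), rpow_sub_one hL]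
  field_simp

theorem rpow_sub_mul_log_rpow_eq_exp {x : ℝ} (hx : 1 < x) (c d γ : ℝ) :
    x ^ (c - d * log x ^ (γ - 1)) = exp (c * log x - d * log x ^ γ) := by
  simpa only [neg_mul, ← sub_eq_add_neg] using rpow_add_mul_log_rpow_eq_exp hx c (-d) γ

theorem rpow_le_two_mul_rpow {u v γ : ℝ} (hγ0 : 0 ≤ γ) (hγ1 : γ ≤ 1) (hu : 0 ≤ u)
    (huv : u ≤ v) (hv : v ≤ 2 * u) : v ^ γ ≤ 2 * u ^ γ :=
  calc v ^ γ ≤ (2 * u) ^ γ := rpow_le_rpow (hu.trans huv) hv hγ0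
    _ = 2 ^ γ * u ^ γ := mul_rpow zero_le_two hu
    _ ≤ 2 ^ (1 : ℝ) * u ^ γ := by gcongr; norm_num
    _ = 2 * u ^ γ := by rw [rpow_one]

theorem log_le_log_add_one_of_le_two_mul {x y : ℝ} (hx : 0 < x) (hy : y ≤ 2 * x) (hxy : x ≤ y) :
    log y ≤ log x + 1 := by
  calc log y ≤ log (2 * x) := log_le_log (hx.trans_le hxy) hy
    _ = log 2 + log x := log_mul two_ne_zero hx.ne'
    _ ≤ log x + 1 := by linarith [log_two_lt_d9]

theorem log_bounds_of_exp_one_le_of_le_two_mul {x y γ : ℝ} (hγ0 : 0 ≤ γ) (hγ1 : γ ≤ 1)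
    (hx : exp 1 ≤ x) (hxy : x ≤ y) (hy : y ≤ 2 * x) :
    1 ≤ log x ^ γ ∧ log x ≤ log y ∧ log y ≤ log x + 1 ∧ log y ^ γ ≤ 2 * log x ^ γ := by
  have hx0 : 0 < x := (exp_pos 1).trans_le hx
  have hu : 1 ≤ log x := by simpa using log_le_log (exp_pos 1) hx
  have hv := log_le_log_add_one_of_le_two_mul hx0 hy hxy
  have huv : log x ≤ log y := log_le_log hx0 hxy
  exact ⟨one_le_rpow hu hγ0, huv, hv, rpow_le_two_mul_rpow hγ0 hγ1 (by linarith) huv (by linarith)⟩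

theorem rpow_sub_mul_log_rpow_le_div {x y γ c C K a : ℝ} (hγ0 : 0 ≤ γ) (hγ1 : γ ≤ 1)
    (hc : c ≤ 0) (hC : 0 ≤ C) (ha : 1 ≤ a) (hK : 2 * C - c + log a ≤ K)
    (hx : exp 1 ≤ x) (hxy : x ≤ y) (hy : y ≤ 2 * x) :
    x ^ (c - K * log x ^ (γ - 1)) ≤ y ^ (c - C * log y ^ (γ - 1)) / a := by
  have hx1 : 1 < x := lt_of_lt_of_le (by simp) hx
  obtain ⟨hu, huv, hvu, hvu'⟩ := log_bounds_of_exp_one_le_of_le_two_mul hγ0 hγ1 hx hxy hy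
  rw [rpow_sub_mul_log_rpow_eq_exp hx1, rpow_sub_mul_log_rpow_eq_exp (hx1.trans_le hxy),
    ← exp_log (by linarith : 0 < a), ← exp_sub, exp_le_exp]
  have hloga : 0 ≤ log a := log_nonneg ha
  nlinarith [mul_le_mul_of_nonneg_left hvu' hC, mul_le_mul_of_nonneg_left hu hloga,
    mul_le_mul_of_nonpos_left hu hc, mul_le_mul_of_nonneg_right hK (zero_le_one.trans hu)]

theorem mul_rpow_add_mul_log_rpow_le {x y γ c C K a : ℝ} (hγ0 : 0 ≤ γ) (hγ1 : γ ≤ 1)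
    (hc : c ≤ 0) (hC : 0 ≤ C) (ha : 1 ≤ a) (hK : 2 * C + log a ≤ K)
    (hx : exp 1 ≤ x) (hxy : x ≤ y) (hy : y ≤ 2 * x) :
    a * y ^ (c + C * log y ^ (γ - 1)) ≤ x ^ (c + K * log x ^ (γ - 1)) := by
  have hx1 : 1 < x := lt_of_lt_of_le (by simp) hx
  obtain ⟨hu, huv, -, hvu'⟩ := log_bounds_of_exp_one_le_of_le_two_mul hγ0 hγ1 hx hxy hy
  rw [rpow_add_mul_log_rpow_eq_exp hx1, rpow_add_mul_log_rpow_eq_exp (hx1.trans_le hxy),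
    ← exp_log (by linarith : 0 < a), ← exp_add, exp_le_exp]
  have hloga : 0 ≤ log a := log_nonneg ha
  nlinarith [mul_le_mul_of_nonneg_left hvu' hC, mul_le_mul_of_nonneg_left hu hloga,
    mul_le_mul_of_nonpos_left huv hc, mul_le_mul_of_nonneg_right hK (zero_le_one.trans hu)]

theorem sum_range_rpow_neg_le {a β : ℝ} (ha : 0 < a) (hβ : 1 < β) (N : ℕ) :
    ∑ i ∈ range N, (a + ↑(i + 1)) ^ (-β) ≤ a ^ (1 - β) / (β - 1) := by
  have hanti : AntitoneOn (fun x : ℝ => x ^ (-β)) (Set.Icc a (a + N)) := fun s hs t _ hst =>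
    rpow_le_rpow_of_nonpos (ha.trans_le hs.1) hst (by linarith)
  refine hanti.sum_le_integral.trans ?_
  rw [integral_rpow (Or.inr ⟨by linarith, ?_⟩)]
  · have h0 : 0 ≤ (a + N) ^ (-(β - 1)) := rpow_nonneg (by positivity) _
    rw [show -β + 1 = -(β - 1) by ring, div_neg, ← neg_div, neg_sub, show 1 - β = -(β - 1) by ring]
    gcongr
    linarith
  · rw [Set.uIcc_of_le (by simp)]
    exact fun h => (lt_irrefl 0) (ha.trans_le h.1)

theorem ENNReal.tsum_natCast_mul_eq_tsum_tsum_add (b : ℕ → ℝ≥0∞) :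
    ∑' k : ℕ, (k : ℝ≥0∞) * b k = ∑' m, ∑' k, b (k + m + 1) := by
  have hcount (k : ℕ) : (k : ℝ≥0∞) * b k = ∑' m, if m < k then b k else 0 := by
    rw [tsum_eq_sum (s := range k) fun m hm => by simp_all]
    simp [sum_ite_of_true (fun m hm => mem_range.1 hm)]
  have hshift (m : ℕ) : (∑' k, if m < k then b k else 0) = ∑' k, b (k + m + 1) := by
    rw [← ENNReal.summable.sum_add_tsum_nat_add' (k := m + 1),
      sum_ite_of_false (fun k hk => by simp at hk; omega)]
    simp only [sum_const_zero, zero_add, ← add_assoc]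
    exact tsum_congr fun k => if_pos (by omega)
  simp_rw [hcount, ← hshift]
  exact ENNReal.tsum_comm

theorem tsum_natCast_mul_eq_tsum_tsum_add {f : ℕ → ℝ} (hf : ∀ k, 0 ≤ f k)
    (hs : Summable fun k : ℕ => (k : ℝ) * f k) :
    ∑' k : ℕ, (k : ℝ) * f k = ∑' m, ∑' k, f (k + m + 1) := by
  -- Exchange the sums in `ℝ≥0∞`, where it is unconditional, then take `toReal` of finite sums.
  have hb := ENNReal.tsum_natCast_mul_eq_tsum_tsum_add (fun k => ENNReal.ofReal (f k))
  have hlhs : ∑' k : ℕ, (k : ℝ≥0∞) * ENNReal.ofReal (f k)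
      = ENNReal.ofReal (∑' k : ℕ, (k : ℝ) * f k) := by
    simp_rw [← ENNReal.ofReal_natCast, ← ENNReal.ofReal_mul (Nat.cast_nonneg _)]
    rw [ENNReal.ofReal_tsum_of_nonneg (fun k => mul_nonneg k.cast_nonneg (hf k)) hs]
  have hfin (m : ℕ) : ∑' k, ENNReal.ofReal (f (k + m + 1)) ≠ ⊤ :=
    ne_top_of_le_ne_top (hb ▸ hlhs ▸ ENNReal.ofReal_ne_top) (ENNReal.le_tsum m)
  have hreal := congrArg ENNReal.toReal hb
  rw [hlhs, ENNReal.toReal_ofReal (tsum_nonneg fun k => mul_nonneg k.cast_nonneg (hf k)),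
    ENNReal.tsum_toReal_eq hfin] at hreal
  refine hreal.trans (tsum_congr fun m => ?_)
  rw [ENNReal.tsum_toReal_eq fun _ => ENNReal.ofReal_ne_top]
  exact tsum_congr fun k => ENNReal.toReal_ofReal (hf _)

theorem tsum_natCast_add_mul_eq {f : ℕ → ℝ} (hf : ∀ k, 0 ≤ f k) (hfs : Summable f)
    (hs : Summable fun k : ℕ => (k : ℝ) * f k) (n : ℕ) :
    ∑' k : ℕ, ((k + n : ℕ) : ℝ) * f (k + n)
      = n * ∑' k, f (k + n) + ∑' m, ∑' k, f (k + (n + m + 1)) := by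
  have hg : Summable fun k => f (k + n) := (summable_nat_add_iff n).2 hfs
  have hsn : Summable fun k : ℕ => ((k + n : ℕ) : ℝ) * f (k + n) :=
    (summable_nat_add_iff (f := fun k : ℕ => (k : ℝ) * f k) n).2 hs
  have hkg : Summable fun k : ℕ => (k : ℝ) * f (k + n) :=
    hsn.of_nonneg_of_le (fun k => mul_nonneg k.cast_nonneg (hf _))
      fun k => mul_le_mul_of_nonneg_right (by simp) (hf _)
  calc ∑' k : ℕ, ((k + n : ℕ) : ℝ) * f (k + n)
      = ∑' k : ℕ, ((n : ℝ) * f (k + n) + (k : ℝ) * f (k + n)) :=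
        tsum_congr fun k => by push_cast; ring
    _ = n * ∑' k, f (k + n) + ∑' k : ℕ, (k : ℝ) * f (k + n) := by
      rw [(hg.mul_left _).tsum_add hkg, tsum_mul_left]
    _ = n * ∑' k, f (k + n) + ∑' m, ∑' k, f (k + (n + m + 1)) := by
      rw [tsum_natCast_mul_eq_tsum_tsum_add (fun k => hf _) hkg]
      simp only [add_assoc, add_comm n]

theorem natCast_mul_tsum_nat_add_le {f : ℕ → ℝ} (hf : ∀ k, 0 ≤ f k) (hfs : Summable f)
    (hs : Summable fun k : ℕ => (k : ℝ) * f k) (n : ℕ) :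
    n * ∑' k, f (k + n) ≤ ∑' k : ℕ, ((k + n : ℕ) : ℝ) * f (k + n) := by
  rw [tsum_natCast_add_mul_eq hf hfs hs]
  exact le_add_of_nonneg_right (tsum_nonneg fun m => tsum_nonneg fun k => hf _)

theorem tsum_natCast_add_mul_le {f : ℕ → ℝ} (hf : ∀ k, 0 ≤ f k) (hfs : Summable f)
    (hs : Summable fun k : ℕ => (k : ℝ) * f k) {n : ℕ} (hn : 0 < n) {β : ℝ} (hβ : 1 < β)
    (htail : ∀ p ≥ n, ∑' k, f (k + (p + 1)) ≤ (p : ℝ) ^ (-β)) :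
    ∑' k : ℕ, ((k + (n + 1) : ℕ) : ℝ) * f (k + (n + 1))
      ≤ (2 + 1 / (β - 1)) * (n : ℝ) ^ (1 - β) := by
  have hn0 : (0 : ℝ) < n := by exact_mod_cast hn
  have hpow : (n : ℝ) * (n : ℝ) ^ (-β) = (n : ℝ) ^ (1 - β) := by
    rw [sub_eq_add_neg, rpow_add hn0, rpow_one]
  have hfirst : ((n + 1 : ℕ) : ℝ) * ∑' k, f (k + (n + 1)) ≤ 2 * (n : ℝ) ^ (1 - β) := by
    rw [← hpow, ← mul_assoc]
    gcongr
    · exact tsum_nonneg fun k => hf _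
    · push_cast
      linarith [show (1 : ℝ) ≤ n by exact_mod_cast hn]
    · exact htail n le_rfl
  have hrest : ∑' m, ∑' k, f (k + (n + 1 + m + 1)) ≤ (n : ℝ) ^ (1 - β) / (β - 1) := by
    refine Real.tsum_le_of_sum_range_le (fun m => tsum_nonneg fun k => hf _) fun N => ?_
    calc ∑ m ∈ range N, ∑' k, f (k + (n + 1 + m + 1))
        ≤ ∑ m ∈ range N, ((n + 1 + m : ℕ) : ℝ) ^ (-β) :=
          sum_le_sum fun m _ => htail _ (by omega)
      _ = ∑ m ∈ range N, ((n : ℝ) + ↑(m + 1)) ^ (-β) :=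
          sum_congr rfl fun m _ => by push_cast; ring_nf
      _ ≤ (n : ℝ) ^ (1 - β) / (β - 1) := sum_range_rpow_neg_le hn0 hβ N
  rw [tsum_natCast_add_mul_eq hf hfs hs]
  calc _ ≤ 2 * (n : ℝ) ^ (1 - β) + (n : ℝ) ^ (1 - β) / (β - 1) := add_le_add hfirst hrest
    _ = _ := by ring

theorem natCast_rpow_le_tsum_natCast_add_mul {f : ℕ → ℝ} (hf : ∀ k, 0 ≤ f k)
    (hfs : Summable f) (hs : Summable fun k : ℕ => (k : ℝ) * f k) {n : ℕ} (hn : 0 < n)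
    {α c : ℝ} (htail : (n : ℝ) ^ (-α - c) ≤ ∑' k, f (k + (n + 1))) :
    (n : ℝ) ^ (1 - α - c) ≤ ∑' k : ℕ, ((k + (n + 1) : ℕ) : ℝ) * f (k + (n + 1)) := by
  have hn0 : (0 : ℝ) < n := by exact_mod_cast hn
  calc (n : ℝ) ^ (1 - α - c) = n * (n : ℝ) ^ (-α - c) := by
        rw [show 1 - α - c = 1 + (-α - c) by ring, rpow_add hn0, rpow_one]
    _ ≤ ((n + 1 : ℕ) : ℝ) * ∑' k, f (k + (n + 1)) :=
        mul_le_mul (by simp) htail (rpow_pos_of_pos hn0 _).le (by positivity)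
    _ ≤ _ := natCast_mul_tsum_nat_add_le hf hfs hs (n + 1)

theorem tsum_natCast_add_mul_le_rpow {f : ℕ → ℝ} (hf : ∀ k, 0 ≤ f k)
    (hfs : Summable f) (hs : Summable fun k : ℕ => (k : ℝ) * f k) {n : ℕ} (hn : 1 < n)
    {α γ C : ℝ} (hα : 1 < α) (hγ : γ ≤ 1) (hC : 0 ≤ C)
    (hsmall : C * log n ^ (γ - 1) ≤ (α - 1) / 2)
    (htail : ∀ p ≥ n, ∑' k, f (k + (p + 1)) ≤ (p : ℝ) ^ (-α + C * log p ^ (γ - 1))) :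
    ∑' k : ℕ, ((k + (n + 1) : ℕ) : ℝ) * f (k + (n + 1))
      ≤ (2 + 2 / (α - 1)) * (n : ℝ) ^ (1 - α + C * log n ^ (γ - 1)) := by
  have hn1 : (1 : ℝ) < n := by exact_mod_cast hn
  have hlog : 0 < log n := log_pos hn1
  set β := α - C * log n ^ (γ - 1) with hβdef
  have hβ : (α - 1) / 2 ≤ β - 1 := by linarith
  have htailβ (p : ℕ) (hp : n ≤ p) : ∑' k, f (k + (p + 1)) ≤ (p : ℝ) ^ (-β) := by
    have hnp : (n : ℝ) ≤ p := by exact_mod_cast hp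
    refine (htail p hp).trans (rpow_le_rpow_of_exponent_le (by linarith) ?_)
    have := rpow_le_rpow_of_nonpos hlog (log_le_log (by linarith) hnp) (by linarith : γ - 1 ≤ 0)
    nlinarith
  calc _ ≤ (2 + 1 / (β - 1)) * (n : ℝ) ^ (1 - β) :=
        tsum_natCast_add_mul_le hf hfs hs (by omega) (by linarith) htailβ
    _ ≤ (2 + 2 / (α - 1)) * (n : ℝ) ^ (1 - β) := by
        have : 1 / (β - 1) ≤ 2 / (α - 1) := by
          rw [div_le_div_iff₀ (by linarith) (by linarith)]
          linarith
        gcongr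
    _ = _ := by rw [hβdef, sub_sub_eq_add_sub, add_sub_right_comm]

theorem one_sub_sum_Icc_eq_tsum {f : ℕ → ℝ} (hf0 : f 0 = 0) (hfs : Summable f)
    (hf1 : ∑' j, f j = 1) (n : ℕ) :
    1 - ∑ j ∈ Icc 1 n, f j = ∑' k, f (k + (n + 1)) := by
  have hIcc : ∑ j ∈ Icc 1 n, f j = ∑ j ∈ range (n + 1), f j := by
    rw [range_eq_Ico, sum_eq_sum_Ico_succ_bot (by omega), hf0, zero_add]
    rfl
  rw [hIcc, ← hf1, ← hfs.sum_add_tsum_nat_add (n + 1)]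
  ring

theorem one_sub_sum_range_div_eq {f : ℕ → ℝ} (hs : Summable fun k : ℕ => (k : ℝ) * f k)
    {μ : ℝ} (hμ : ∑' j : ℕ, (j : ℝ) * f j = μ) (hμ0 : μ ≠ 0) (n : ℕ) :
    1 - ∑ j ∈ range n, ((j : ℝ) + 1) * f (j + 1) / μ
      = (∑' k : ℕ, ((k + (n + 1) : ℕ) : ℝ) * f (k + (n + 1))) / μ := by
  have hsplit : ∑ j ∈ range n, ((j : ℝ) + 1) * f (j + 1)
      + ∑' k : ℕ, ((k + (n + 1) : ℕ) : ℝ) * f (k + (n + 1)) = μ := by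
    rw [← hμ, ← hs.sum_add_tsum_nat_add (n + 1), sum_range_succ']
    push_cast
    ring
  rw [← sum_div, eq_div_iff hμ0, sub_mul, one_mul, div_mul_cancel₀ _ hμ0]
  linarith

theorem le_natCast_floor_add_one_le_two_mul {x : ℝ} (hx : 1 ≤ x) :
    x ≤ ((⌊x⌋₊ + 1 : ℕ) : ℝ) ∧ ((⌊x⌋₊ + 1 : ℕ) : ℝ) ≤ 2 * x := by
  push_cast
  exact ⟨(Nat.lt_floor_add_one x).le, by linarith [Nat.floor_le (zero_le_one.trans hx)]⟩

theorem one_le_tsum_natCast_mul {f : ℕ → ℝ} (hf : ∀ j, 0 ≤ f j) (hf0 : f 0 = 0)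
    (hfs : Summable f) (hs : Summable fun k : ℕ => (k : ℝ) * f k) (hf1 : ∑' j, f j = 1) :
    1 ≤ ∑' j : ℕ, (j : ℝ) * f j := by
  refine hf1 ▸ hfs.tsum_le_tsum (fun j => ?_) hs
  rcases j with _ | j
  · simp [hf0]
  · exact le_mul_of_one_le_left (hf _) (by simp)

theorem tendsto_mul_log_rpow_atTop {γ : ℝ} (hγ : γ < 1) (C : ℝ) :
    Tendsto (fun y => C * log y ^ (γ - 1)) atTop (nhds 0) := by
  have h := (tendsto_rpow_neg_atTop (by linarith : 0 < 1 - γ)).comp tendsto_log_atTop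
  simpa [Function.comp_def] using h.const_mul C

theorem stmt_0_general
    (f : ℕ → ℝ) (τ γ C : ℝ)
    (hf_nonneg : ∀ j, 0 ≤ f j) (hf0 : f 0 = 0)
    (hf_sum : ∑' j : ℕ, f j = 1)
    (hτ1 : 2 < τ) (hγ1 : 0 ≤ γ) (hγ2 : γ < 1) (hC : 0 < C)
    (hμ_sum : Summable fun j : ℕ => (j : ℝ) * f j)
    (μ : ℝ) (hμ : μ = ∑' j : ℕ, (j : ℝ) * f j)
    (F G : ℝ → ℝ)
    (hF : ∀ x, F x = ∑ j ∈ Finset.Icc 1 ⌊x⌋₊, f j)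
    (hG : ∀ x, G x = ∑ j ∈ Finset.range (⌊x⌋₊ + 1), ((j : ℝ) + 1) * f (j + 1) / μ)
    (hass : ∃ x₀ : ℝ, 1 < x₀ ∧ ∀ x : ℝ, x₀ ≤ x →
      x ^ (-(τ - 1) - C * Real.log x ^ (γ - 1)) ≤ 1 - F x ∧
      1 - F x ≤ x ^ (-(τ - 1) + C * Real.log x ^ (γ - 1))) :
    ∃ K : ℝ, 0 < K ∧ ∃ x₁ : ℝ, 1 < x₁ ∧ ∀ x : ℝ, x₁ ≤ x →
      x ^ (2 - τ - K * Real.log x ^ (γ - 1)) ≤ 1 - G x ∧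
      1 - G x ≤ x ^ (2 - τ + K * Real.log x ^ (γ - 1)) := by
  obtain ⟨x₀, -, hx₀⟩ := hass
  have hfs : Summable f := by
    by_contra h
    simp [tsum_eq_zero_of_not_summable h] at hf_sum
  have hμ1 : 1 ≤ μ := hμ ▸ one_le_tsum_natCast_mul hf_nonneg hf0 hfs hμ_sum hf_sum
  have htail (p : ℕ) : ∑' k, f (k + (p + 1)) = 1 - F p := by
    rw [hF, Nat.floor_natCast, one_sub_sum_Icc_eq_tsum hf0 hfs hf_sum]
  obtain ⟨x₂, hx₂⟩ := eventually_atTop.1 <| (tendsto_mul_log_rpow_atTop hγ2 C).eventually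
    (ge_mem_nhds (by linarith : (0 : ℝ) < (τ - 1 - 1) / 2))
  set A := 2 + 2 / (τ - 1 - 1)
  have hA : 1 ≤ A := by linarith [div_nonneg zero_le_two (by linarith : (0 : ℝ) ≤ τ - 1 - 1)]
  have hlogμ := log_nonneg hμ1
  have hlogA := log_nonneg hA
  refine ⟨2 * C - (2 - τ) + log μ + log A, by linarith, max (max x₀ x₂) (exp 1),
    lt_max_of_lt_right (by simp), fun x hx => ?_⟩
  obtain ⟨⟨hx₀x, hx₂x⟩, hex⟩ : (x₀ ≤ x ∧ x₂ ≤ x) ∧ exp 1 ≤ x := by simpa using hx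
  have hx1 : 1 < x := lt_of_lt_of_le (by simp) hex
  obtain ⟨hxn, hnx⟩ := le_natCast_floor_add_one_le_two_mul hx1.le
  set n := ⌊x⌋₊ + 1
  have hGx : 1 - G x = (∑' k : ℕ, ((k + (n + 1) : ℕ) : ℝ) * f (k + (n + 1))) / μ := by
    rw [hG, one_sub_sum_range_div_eq hμ_sum hμ.symm (by positivity)]
  have hτ : (2 : ℝ) - τ = 1 - (τ - 1) := by ring
  constructor
  · calc x ^ (2 - τ - (2 * C - (2 - τ) + log μ + log A) * log x ^ (γ - 1))
        ≤ (n : ℝ) ^ (2 - τ - C * log n ^ (γ - 1)) / μ :=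
          rpow_sub_mul_log_rpow_le_div hγ1 hγ2.le (by linarith) hC.le hμ1 (by linarith)
            hex hxn hnx
      _ ≤ _ := by
          rw [hGx, hτ]
          gcongr
          refine natCast_rpow_le_tsum_natCast_add_mul hf_nonneg hfs hμ_sum (by omega) ?_
          exact htail n ▸ (hx₀ n (hx₀x.trans hxn)).1
  · calc 1 - G x ≤ ∑' k : ℕ, ((k + (n + 1) : ℕ) : ℝ) * f (k + (n + 1)) := by
          rw [hGx]
          exact div_le_self (tsum_nonneg fun k => mul_nonneg (Nat.cast_nonneg _) (hf_nonneg _)) hμ1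
      _ ≤ A * (n : ℝ) ^ (2 - τ + C * log n ^ (γ - 1)) := by
          rw [hτ]
          refine tsum_natCast_add_mul_le_rpow hf_nonneg hfs hμ_sum
            (by exact_mod_cast hx1.trans_le hxn) (by linarith) hγ2.le hC.le
            (hx₂ n (hx₂x.trans hxn)) fun p hp => ?_
          exact htail p ▸ (hx₀ p (hx₀x.trans (hxn.trans (by exact_mod_cast hp)))).2
      _ ≤ _ := mul_rpow_add_mul_log_rpow_le hγ1 hγ2.le (by linarith) hC.le hA (by linarith)
            hex hxn hnx

/-- Under Assumption 1.1 there exists `K_τ > 0` such that for all sufficiently large `x`,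
`x^(2-τ-K_τ(log x)^(γ-1)) ≤ 1 - G(x) ≤ x^(2-τ+K_τ(log x)^(γ-1))`. -/
theorem stmt_0
    (f : ℕ → ℝ) (τ γ C : ℝ)
    (hf_nonneg : ∀ j, 0 ≤ f j) (hf0 : f 0 = 0)
    (hf_sum : ∑' j : ℕ, f j = 1)
    (hτ1 : 2 < τ) (hτ2 : τ < 3) (hγ1 : 0 ≤ γ) (hγ2 : γ < 1) (hC : 0 < C)
    (hμ_sum : Summable fun j : ℕ => (j : ℝ) * f j)
    (μ : ℝ) (hμ : μ = ∑' j : ℕ, (j : ℝ) * f j)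
    (F G : ℝ → ℝ)
    (hF : ∀ x, F x = ∑ j ∈ Finset.Icc 1 ⌊x⌋₊, f j)
    (hG : ∀ x, G x = ∑ j ∈ Finset.range (⌊x⌋₊ + 1), ((j : ℝ) + 1) * f (j + 1) / μ)
    (hass : ∃ x₀ : ℝ, 1 < x₀ ∧ ∀ x : ℝ, x₀ ≤ x →
      x ^ (-(τ - 1) - C * Real.log x ^ (γ - 1)) ≤ 1 - F x ∧
      1 - F x ≤ x ^ (-(τ - 1) + C * Real.log x ^ (γ - 1))) :
    ∃ K : ℝ, 0 < K ∧ ∃ x₁ : ℝ, 1 < x₁ ∧ ∀ x : ℝ, x₁ ≤ x →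
      x ^ (2 - τ - K * Real.log x ^ (γ - 1)) ≤ 1 - G x ∧
      1 - G x ≤ x ^ (2 - τ + K * Real.log x ^ (γ - 1)) :=
  stmt_0_general f τ γ C hf_nonneg hf0 hf_sum hτ1 hγ1 hγ2 hC hμ_sum μ hμ F G hF hG hass
end

section
/- For every natural number x, 1 - G(x) = (1/μ)·[(x+2)(1 - F(x+1)) + ∑_{j=x+2}^∞ (1 - F(j))], where the series on the right converges. -/
/-!
Write `n = #{j : j < n}` and swap the order of summation: `∑ₙ n f(n) = ∑ⱼ ∑_{n > j} f(n)`, i.e.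
the mean is the sum of the tails. Applied to the law shifted by `x + 2`, this gives
`∑_{n ≥ x+2} n f(n) = (x + 2)(1 - F(x+1)) + ∑_{j ≥ x+2} (1 - F(j))`, and the left-hand side is
`μ (1 - G(x))` because `μ G(x) = ∑_{n ≤ x+1} n f(n)`.
-/

open Finset

open scoped ENNReal

theorem ENNReal.tsum_tsum_nat_add_eq_tsum_mul (g : ℕ → ℝ≥0∞) :
    ∑' j, ∑' k, g (k + (j + 1)) = ∑' n, n * g n := by
  have h_count : ∀ n : ℕ, ∑' j : ℕ, (if j < n then g n else 0) = n * g n := fun n => by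
    rw [tsum_eq_sum (s := range n) (by simp +contextual), sum_ite_of_true (by simp)]
    simp
  have h_tail : ∀ j : ℕ, ∑' n, (if j < n then g n else 0) = ∑' k, g (k + (j + 1)) := fun j => by
    rw [← ENNReal.summable.sum_add_tsum_nat_add' (k := j + 1),
      sum_eq_zero fun i hi => if_neg (by simpa [Nat.lt_succ_iff] using hi), zero_add]
    exact tsum_congr fun k => if_pos (by omega)
  simp_rw [← h_count, ← h_tail]
  exact ENNReal.tsum_comm

theorem hasSum_tsum_nat_add_of_summable_mul {f : ℕ → ℝ} (hf : ∀ n, 0 ≤ f n)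
    (h : Summable fun n : ℕ => n * f n) :
    HasSum (fun j => ∑' k, f (k + (j + 1))) (∑' n : ℕ, n * f n) := by
  let g : ℕ → ℝ≥0∞ := fun n => ENNReal.ofReal (f n)
  have h_fin : ∑' j, ∑' k, g (k + (j + 1)) ≠ ⊤ := by
    rw [ENNReal.tsum_tsum_nat_add_eq_tsum_mul]
    convert h.tsum_ofReal_ne_top using 3 with n
    rw [ENNReal.ofReal_mul n.cast_nonneg, ENNReal.ofReal_natCast]
  have h_sum := ENNReal.hasSum_toReal h_fin
  rw [← ENNReal.tsum_toReal_eq (ENNReal.ne_top_of_tsum_ne_top h_fin),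
    ENNReal.tsum_tsum_nat_add_eq_tsum_mul, ENNReal.tsum_toReal_eq fun n => by finiteness] at h_sum
  simpa [g, ENNReal.tsum_toReal_eq, ENNReal.toReal_ofReal, hf] using h_sum

theorem summable_natCast_mul_nat_add {f : ℕ → ℝ} (hf : ∀ n, 0 ≤ f n)
    (h : Summable fun n : ℕ => n * f n) (b : ℕ) :
    Summable fun n : ℕ => n * f (n + b) := by
  refine ((summable_nat_add_iff b).2 h).of_nonneg_of_le
    (fun n => mul_nonneg n.cast_nonneg (hf _)) fun n => ?_
  gcongr
  · exact hf _
  · exact_mod_cast n.le_add_right b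

theorem tsum_natCast_add_mul_nat_add {f : ℕ → ℝ} (hf : ∀ n, 0 ≤ f n) (h₁ : Summable f)
    (h : Summable fun n : ℕ => n * f n) (b : ℕ) :
    ∑' n : ℕ, ((n : ℝ) + b) * f (n + b) = b * ∑' n, f (n + b) + ∑' n : ℕ, n * f (n + b) := by
  rw [← tsum_mul_left, ← Summable.tsum_add (((summable_nat_add_iff b).2 h₁).mul_left _)
    (summable_natCast_mul_nat_add hf h b)]
  exact tsum_congr fun n => by ring

theorem sum_Icc_one_add_tsum_nat_add {M : Type*} [AddCommGroup M] [TopologicalSpace M]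
    [IsTopologicalAddGroup M] [T2Space M] {f : ℕ → M} (hf : Summable f) (hf0 : f 0 = 0) (n : ℕ) :
    ∑ j ∈ Icc 1 n, f j + ∑' k, f (k + (n + 1)) = ∑' j, f j := by
  rw [← hf.sum_add_tsum_nat_add (n + 1), range_eq_Ico, sum_eq_sum_Ico_succ_bot n.succ_pos, hf0,
    zero_add, zero_add, Nat.succ_eq_add_one, Ico_add_one_right_eq_Icc]

/-- For every natural number `x`,
`1 - G(x) = (1/μ)·[(x+2)(1 - F(x+1)) + ∑_{j=x+2}^∞ (1 - F(j))]`,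
where the series on the right converges. -/
theorem stmt_1
    (f : ℕ → ℝ)
    (hf_nonneg : ∀ j, 0 ≤ f j) (hf0 : f 0 = 0)
    (hf_sum : ∑' j : ℕ, f j = 1)
    (hμ_sum : Summable fun j : ℕ => (j : ℝ) * f j)
    (μ : ℝ) (hμ : μ = ∑' j : ℕ, (j : ℝ) * f j) (hμ_pos : 0 < μ)
    (F G : ℕ → ℝ)
    (hF : ∀ n, F n = ∑ j ∈ Finset.Icc 1 n, f j)
    (hG : ∀ n, G n = ∑ j ∈ Finset.range (n + 1), ((j : ℝ) + 1) * f (j + 1) / μ)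
    (x : ℕ) :
    Summable (fun j : ℕ => 1 - F (x + 2 + j)) ∧
    1 - G x = (1 / μ) *
      (((x : ℝ) + 2) * (1 - F (x + 1)) + ∑' j : ℕ, (1 - F (x + 2 + j))) := by
  have hf : Summable f := by
    by_contra h
    simp [tsum_eq_zero_of_not_summable h] at hf_sum
  have hF_tail : ∀ n, 1 - F n = ∑' k, f (k + (n + 1)) := fun n => by
    rw [← hf_sum, ← sum_Icc_one_add_tsum_nat_add hf hf0 n, hF, add_sub_cancel_left]
  have hμG : μ * G x = ∑ n ∈ range (x + 2), (n : ℝ) * f n := by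
    rw [hG, mul_sum, sum_range_succ' _ (x + 1)]
    simp only [Nat.cast_add, Nat.cast_one, Nat.cast_zero, zero_mul, add_zero]
    exact sum_congr rfl fun j _ => by field_simp
  have h_tails : HasSum (fun j => 1 - F (x + 2 + j)) (∑' n : ℕ, n * f (n + (x + 2))) := by
    convert hasSum_tsum_nat_add_of_summable_mul (fun n => hf_nonneg (n + (x + 2)))
      (summable_natCast_mul_nat_add hf_nonneg hμ_sum (x + 2)) using 2 with j
    rw [hF_tail]
    exact tsum_congr fun k => by congr 1; omega
  refine ⟨h_tails.summable, ?_⟩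
  have h_split := hμ_sum.sum_add_tsum_nat_add (x + 2)
  have h_weighted := tsum_natCast_add_mul_nat_add hf_nonneg hf hμ_sum (x + 2)
  push_cast at h_split h_weighted
  rw [h_tails.tsum_eq, show 1 - F (x + 1) = ∑' k, f (k + (x + 2)) from hF_tail (x + 1)]
  field_simp
  linarith
end

section
/- Let y₁ > y₂ > 0, κ > 1, and let n be an integer with n > log(y₁/y₂)/log κ. Set t̂ = n/2 + log(y₂/y₁)/(2 log κ). Then every minimizer t* of the function t ↦ κ^t y₁ + κ^{n-t} y₂ over the finite set {0,1,…,n} satisfies |t* - t̂| ≤ 1/2. -/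
/-- Let `y₁ > y₂ > 0`, `κ > 1`, and let `n` be an integer with
`n > log(y₁/y₂)/log κ`. Set `t̂ = n/2 + log(y₂/y₁)/(2 log κ)`. Then every minimizer
`t*` of `t ↦ κ^t y₁ + κ^{n-t} y₂` over `{0,1,…,n}` satisfies `|t* - t̂| ≤ 1/2`. -/
theorem stmt_9 (y₁ y₂ κ : ℝ) (h21 : y₂ < y₁) (h2 : 0 < y₂) (hκ : 1 < κ)
    (n : ℤ) (hn : Real.log (y₁ / y₂) / Real.log κ < (n : ℝ))
    (tstar : ℤ) (hts0 : 0 ≤ tstar) (htsn : tstar ≤ n)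
    (hmin : ∀ t : ℤ, 0 ≤ t → t ≤ n →
      κ ^ (tstar : ℝ) * y₁ + κ ^ ((n : ℝ) - (tstar : ℝ)) * y₂ ≤
        κ ^ (t : ℝ) * y₁ + κ ^ ((n : ℝ) - (t : ℝ)) * y₂) :
    |(tstar : ℝ) - ((n : ℝ) / 2 + Real.log (y₂ / y₁) / (2 * Real.log κ))| ≤ 1 / 2 := by
  have hκ0 : (0:ℝ) < κ := lt_trans one_pos hκ
  have hc : 0 < Real.log κ := Real.log_pos hκ
  set c := Real.log κ with hcdef
  clear_value c
  have h1 : 0 < y₁ := lt_trans h2 h21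
  set th : ℝ := (n:ℝ)/2 + Real.log (y₂/y₁) / (2*c) with hth
  clear_value th
  have hlog : Real.log (y₁/y₂) = - Real.log (y₂/y₁) := by
    rw [Real.log_div h1.ne' h2.ne', Real.log_div h2.ne' h1.ne']; ring
  have hn' : Real.log (y₁/y₂) < (n:ℝ) * c := by
    have := (div_lt_iff₀ hc).mp hn
    linarith
  have hlogpos : 0 < Real.log (y₁/y₂) := Real.log_pos (by
    rw [lt_div_iff₀ h2]; linarith)
  have hlogneg : Real.log (y₂/y₁) < 0 := by linarith [hlog]
  have hth_pos : 0 < th := by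
    have hrepr : th = ((n:ℝ)*c + Real.log (y₂/y₁)) / (2*c) := by
      rw [hth]; field_simp
    rw [hrepr]
    apply div_pos _ (by positivity)
    have := hlog ▸ hn'
    linarith
  have hn1 : (1:ℝ) ≤ (n:ℝ) := by
    have hnpos : (0:ℝ) < (n:ℝ) := lt_trans (by positivity) hn
    have : (0:ℤ) < n := by exact_mod_cast hnpos
    exact_mod_cast this
  have hth_lt : th < (n:ℝ) - 1/2 := by
    rw [hth]
    have : Real.log (y₂/y₁) / (2*c) < 0 := div_neg_of_neg_of_pos hlogneg (by positivity)
    linarith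
  -- key identity: κ ^ (n - 2 th) = y₁ / y₂
  have hkey : κ ^ ((n:ℝ) - 2*th) = y₁ / y₂ := by
    have e : (n:ℝ) - 2*th = Real.log (y₁/y₂) / c := by
      rw [hth, hlog]; field_simp; ring
    rw [e, Real.rpow_def_of_pos hκ0, ← hcdef, mul_div_cancel₀ _ hc.ne',
      Real.exp_log (by positivity)]
  have fval : ∀ t : ℝ, κ ^ t * y₁ + κ ^ ((n:ℝ) - t) * y₂ =
      κ ^ th * y₁ * (κ ^ (t - th) + κ ^ (-(t - th))) := by
    intro t
    have e1 : κ ^ t = κ ^ th * κ ^ (t - th) := by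
      rw [← Real.rpow_add hκ0]; ring_nf
    have e2 : κ ^ ((n:ℝ) - t) * y₂ = κ ^ th * y₁ * κ ^ (-(t - th)) := by
      have e : κ ^ ((n:ℝ) - t) = κ ^ ((n:ℝ) - 2*th) * (κ ^ th * κ ^ (-(t - th))) := by
        rw [← Real.rpow_add hκ0, ← Real.rpow_add hκ0]; ring_nf
      rw [e, hkey]
      field_simp
    rw [e1, e2]; ring
  have mono : ∀ a b : ℝ, |a| < |b| → κ ^ a + κ ^ (-a) < κ ^ b + κ ^ (-b) := by
    intro a b hab
    have symm : ∀ x : ℝ, κ ^ x + κ ^ (-x) = κ ^ |x| + κ ^ (-|x|) := by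
      intro x
      rcases abs_cases x with ⟨h, _⟩ | ⟨h, _⟩ <;> rw [h]
      ring_nf
    rw [symm a, symm b]
    set p := |a| with hp'
    set q := |b| with hq'
    have hp : 0 ≤ p := abs_nonneg a
    have hq : 0 < q := lt_of_le_of_lt hp hab
    have h1' : κ ^ p < κ ^ q := (Real.rpow_lt_rpow_left_iff hκ).mpr hab
    have h2' : κ ^ (-(p+q)) < 1 := by
      have : κ ^ (-(p+q)) < κ ^ (0:ℝ) :=
        (Real.rpow_lt_rpow_left_iff hκ).mpr (by linarith)
      simpa using this
    have e1 : κ ^ q * κ ^ (-(p+q)) = κ ^ (-p) := by rw [← Real.rpow_add hκ0]; ring_nf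
    have e2 : κ ^ p * κ ^ (-(p+q)) = κ ^ (-q) := by rw [← Real.rpow_add hκ0]; ring_nf
    nlinarith [mul_pos (sub_pos.mpr h1') (sub_pos.mpr h2')]
  by_contra habs
  push_neg at habs
  set t' : ℤ := ⌊th + 1/2⌋ with ht'
  clear_value t'
  have hle : (t':ℝ) ≤ th + 1/2 := by rw [ht']; exact Int.floor_le _
  have hgt : th - 1/2 < (t':ℝ) := by
    have := Int.lt_floor_add_one (th + 1/2); rw [← ht'] at this; linarith
  have ht'0 : 0 ≤ t' := by
    rw [ht', Int.le_floor]
    push_cast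
    linarith
  have ht'n : t' ≤ n := by
    have h := Int.floor_le_floor (show th + 1/2 ≤ ((n:ℤ):ℝ) by push_cast; linarith)
    rw [Int.floor_intCast] at h
    rw [ht']
    exact h
  have habs' : |(t':ℝ) - th| < |(tstar:ℝ) - th| := by
    have h1'' : |(t':ℝ) - th| ≤ 1/2 := abs_le.mpr ⟨by linarith, by linarith⟩
    exact lt_of_le_of_lt h1'' habs
  have hmono := mono ((t':ℝ) - th) ((tstar:ℝ) - th) habs'
  have hm := hmin t' ht'0 ht'n
  rw [fval (tstar:ℝ), fval (t':ℝ)] at hm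
  have hA : 0 < κ ^ th * y₁ := by positivity
  nlinarith [hm, hmono, hA]
end

section
/- Let y₁ > y₂ > 0, κ > 1, and let n be an integer with n > log(y₁/y₂)/log κ. Then every minimizer t* of the function t ↦ κ^t y₁ + κ^{n-t} y₂ over {0,1,…,n} satisfies max{κ^{t*} y₁/(κ^{n-t*} y₂), κ^{n-t*} y₂/(κ^{t*} y₁)} ≤ κ. -/
/-- Let `y₁ > y₂ > 0`, `κ > 1`, and let `n` be an integer with
`n > log(y₁/y₂)/log κ`. Then every minimizer `t*` of `t ↦ κ^t y₁ + κ^{n-t} y₂`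
over `{0,1,…,n}` satisfies
`max{κ^{t*} y₁/(κ^{n-t*} y₂), κ^{n-t*} y₂/(κ^{t*} y₁)} ≤ κ`. -/
theorem stmt_10 (y₁ y₂ κ : ℝ) (h21 : y₂ < y₁) (h2 : 0 < y₂) (hκ : 1 < κ)
    (n : ℤ) (hn : Real.log (y₁ / y₂) / Real.log κ < (n : ℝ))
    (tstar : ℤ) (hts0 : 0 ≤ tstar) (htsn : tstar ≤ n)
    (hmin : ∀ t : ℤ, 0 ≤ t → t ≤ n →
      κ ^ (tstar : ℝ) * y₁ + κ ^ ((n : ℝ) - (tstar : ℝ)) * y₂ ≤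
        κ ^ (t : ℝ) * y₁ + κ ^ ((n : ℝ) - (t : ℝ)) * y₂) :
    max ((κ ^ (tstar : ℝ) * y₁) / (κ ^ ((n : ℝ) - (tstar : ℝ)) * y₂))
        ((κ ^ ((n : ℝ) - (tstar : ℝ)) * y₂) / (κ ^ (tstar : ℝ) * y₁)) ≤ κ := by
  have hκ0 : (0:ℝ) < κ := by linarith
  have hy1 : (0:ℝ) < y₁ := by linarith
  have hlogκ : 0 < Real.log κ := Real.log_pos hκ
  have hlogr : 0 < Real.log (y₁ / y₂) := Real.log_pos (by rw [lt_div_iff₀ h2]; linarith)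
  have hnpos : (0:ℝ) < (n:ℝ) := lt_trans (div_pos hlogr hlogκ) hn
  have hP : 0 < κ ^ (tstar : ℝ) := Real.rpow_pos_of_pos hκ0 _
  have hQ : 0 < κ ^ ((n : ℝ) - (tstar : ℝ)) := Real.rpow_pos_of_pos hκ0 _
  have hApos : 0 < κ ^ (tstar : ℝ) * y₁ := mul_pos hP hy1
  have hBpos : 0 < κ ^ ((n : ℝ) - (tstar : ℝ)) * y₂ := mul_pos hQ h2
  -- key fact: κ^n > y₁/y₂
  have hrn : y₁ / y₂ < κ ^ (n:ℝ) := by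
    have h1 : Real.log (y₁ / y₂) < (n:ℝ) * Real.log κ := by
      rw [div_lt_iff₀ hlogκ] at hn; linarith
    rw [← Real.log_rpow hκ0] at h1
    exact (Real.log_lt_log_iff (div_pos hy1 h2) (Real.rpow_pos_of_pos hκ0 _)).mp h1
  have key1 : κ ^ (tstar : ℝ) * y₁ ≤ κ * (κ ^ ((n : ℝ) - (tstar : ℝ)) * y₂) := by
    rcases eq_or_lt_of_le hts0 with h0 | h0
    · have ht0 : tstar = 0 := h0.symm
      subst ht0
      simp only [Int.cast_zero, Real.rpow_zero, one_mul, sub_zero]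
      have : y₁ < κ ^ (n:ℝ) * y₂ := by
        rw [div_lt_iff₀ h2] at hrn; linarith
      nlinarith [Real.rpow_pos_of_pos hκ0 ((n:ℝ))]
    · have hm := hmin (tstar - 1) (by omega) (by omega)
      have e1 : κ ^ (((tstar - 1 : ℤ)) : ℝ) = κ ^ (tstar:ℝ) / κ := by
        push_cast
        rw [Real.rpow_sub hκ0, Real.rpow_one]
      have e2 : κ ^ ((n:ℝ) - ((tstar - 1 : ℤ):ℝ)) = κ ^ ((n:ℝ)-(tstar:ℝ)) * κ := by
        push_cast
        rw [show (n:ℝ) - ((tstar:ℝ) - 1) = ((n:ℝ) - (tstar:ℝ)) + 1 by ring,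
          Real.rpow_add hκ0, Real.rpow_one]
      rw [e1, e2] at hm
      have hκ1 : 0 < κ - 1 := by linarith
      have hm' : κ * (κ ^ (tstar:ℝ) * y₁) + κ * (κ ^ ((n:ℝ)-(tstar:ℝ)) * y₂) ≤
          κ ^ (tstar:ℝ) * y₁ + κ ^ ((n:ℝ)-(tstar:ℝ)) * κ * y₂ * κ := by
        have := mul_le_mul_of_nonneg_left hm hκ0.le
        field_simp at this ⊢
        nlinarith [this]
      nlinarith [hm', hApos, hBpos]
  have key2 : κ ^ ((n : ℝ) - (tstar : ℝ)) * y₂ ≤ κ * (κ ^ (tstar : ℝ) * y₁) := by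
    rcases eq_or_lt_of_le htsn with h0 | h0
    · subst h0
      simp only [sub_self, Real.rpow_zero, one_mul]
      have h1 : (1:ℝ) ≤ κ ^ ((tstar:ℝ)) := Real.one_le_rpow hκ.le hnpos.le
      nlinarith
    · have hm := hmin (tstar + 1) (by omega) (by omega)
      have e1 : κ ^ (((tstar + 1 : ℤ)) : ℝ) = κ ^ (tstar:ℝ) * κ := by
        push_cast
        rw [Real.rpow_add hκ0, Real.rpow_one]
      have e2 : κ ^ ((n:ℝ) - ((tstar + 1 : ℤ):ℝ)) = κ ^ ((n:ℝ)-(tstar:ℝ)) / κ := by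
        push_cast
        rw [show (n:ℝ) - ((tstar:ℝ) + 1) = ((n:ℝ) - (tstar:ℝ)) - 1 by ring,
          Real.rpow_sub hκ0, Real.rpow_one]
      rw [e1, e2] at hm
      have hκ1 : 0 < κ - 1 := by linarith
      have hm' : κ * (κ ^ (tstar:ℝ) * y₁) + κ * (κ ^ ((n:ℝ)-(tstar:ℝ)) * y₂) ≤
          κ ^ (tstar:ℝ) * κ * y₁ * κ + κ ^ ((n:ℝ)-(tstar:ℝ)) * y₂ := by
        have := mul_le_mul_of_nonneg_left hm hκ0.le
        field_simp at this ⊢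
        nlinarith [this]
      nlinarith [hm', hApos, hBpos]
  apply max_le
  · rw [div_le_iff₀ hBpos]; linarith
  · rw [div_le_iff₀ hApos]; linarith
end

section
/- Let κ > 1, c ∈ {0,1}, and let Y⁽¹⁾, Y⁽²⁾ be independent real random variables such that for i = 1,2 the law of Y⁽ⁱ⁾ equals (1-q_i)·δ₀ + q_i·ν_i, where q_i ∈ (0,1] and ν_i is a probability measure on (0,∞) that is absolutely continuous with respect to Lebesgue measure. For y₁, y₂ > 0 the minimum M = min_{t∈ℤ} (κ^t Y⁽¹⁾ + κ^{c-t} Y⁽²⁾) is attained (the function tends to infinity as |t| → ∞), and the conditional law of M given the event {Y⁽¹⁾ > 0, Y⁽²⁾ > 0} is absolutely continuous with respect to Lebesgue measure. -/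
open MeasureTheory ProbabilityTheory

lemma min_attained' (κ : ℝ) (hκ : 1 < κ) (c : ℤ) (hc : 0 ≤ c) (y₁ y₂ : ℝ)
    (h₁ : 0 < y₁) (h₂ : 0 < y₂) :
    ∃ t : ℤ, ∀ s : ℤ, κ ^ t * y₁ + κ ^ (c - t) * y₂ ≤ κ ^ s * y₁ + κ ^ (c - s) * y₂ := by
  have hκ0 : (0:ℝ) < κ := lt_trans one_pos hκ
  set g : ℤ → ℝ := fun s => κ ^ s * y₁ + κ ^ (c - s) * y₂ with hg
  have hgpos : ∀ s, 0 < κ ^ s * y₁ ∧ 0 < κ ^ (c - s) * y₂ := fun s =>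
    ⟨mul_pos (zpow_pos hκ0 _) h₁, mul_pos (zpow_pos hκ0 _) h₂⟩
  have htend : Filter.Tendsto (fun n : ℕ => κ ^ n) Filter.atTop Filter.atTop :=
    tendsto_pow_atTop_atTop_of_one_lt hκ
  obtain ⟨N, hN⟩ := (((htend.atTop_mul_const h₁).eventually_gt_atTop (g 0)).and
    ((htend.atTop_mul_const h₂).eventually_gt_atTop (g 0))).exists
  have key : ∀ s : ℤ, s ∉ Finset.Icc (-(N:ℤ)) (N:ℤ) → g 0 < g s := by
    intro s hs
    rw [Finset.mem_Icc, not_and_or, not_le, not_le] at hs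
    rcases hs with hs | hs
    · have h1 : (N:ℤ) ≤ c - s := by omega
      have h2 : κ ^ (N:ℤ) ≤ κ ^ (c - s) := zpow_le_zpow_right₀ hκ.le h1
      have : g 0 < κ ^ (c - s) * y₂ := lt_of_lt_of_le hN.2 (by
        rw [← zpow_natCast κ N]; exact mul_le_mul_of_nonneg_right h2 h₂.le)
      exact lt_of_lt_of_le this (le_add_of_nonneg_left (hgpos s).1.le)
    · have h2 : κ ^ (N:ℤ) ≤ κ ^ s := zpow_le_zpow_right₀ hκ.le hs.le
      have : g 0 < κ ^ s * y₁ := lt_of_lt_of_le hN.1 (by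
        rw [← zpow_natCast κ N]; exact mul_le_mul_of_nonneg_right h2 h₁.le)
      exact lt_of_lt_of_le this (le_add_of_nonneg_right (hgpos s).2.le)
  have hne : (Finset.Icc (-(N:ℤ)) (N:ℤ)).Nonempty :=
    ⟨0, by simp [Finset.mem_Icc]⟩
  obtain ⟨t, htmem, ht⟩ := Finset.exists_min_image _ g hne
  refine ⟨t, fun s => ?_⟩
  by_cases hs : s ∈ Finset.Icc (-(N:ℤ)) (N:ℤ)
  · exact ht s hs
  · exact le_of_lt (lt_of_le_of_lt (ht 0 (by simp [Finset.mem_Icc])) (key s hs))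

lemma prod_null' (a b : ℝ) (_ha : 0 < a) (hb : 0 < b)
    (q₁ q₂ : ℝ) (ν₁ ν₂ : Measure ℝ)
    [IsProbabilityMeasure ν₁] [IsProbabilityMeasure ν₂]
    (hν₂ac : ν₂ ≪ (volume : Measure ℝ))
    (A : Set ℝ) (hA : MeasurableSet A) (hA0 : volume A = 0) :
    ((ENNReal.ofReal (1 - q₁) • Measure.dirac (0:ℝ) + ENNReal.ofReal q₁ • ν₁).prod
     (ENNReal.ofReal (1 - q₂) • Measure.dirac (0:ℝ) + ENNReal.ofReal q₂ • ν₂))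
      (((fun p : ℝ × ℝ => a * p.1 + b * p.2) ⁻¹' A) ∩ (Set.Ioi 0 ×ˢ Set.Ioi 0)) = 0 := by
  set T : Set (ℝ × ℝ) :=
    ((fun p : ℝ × ℝ => a * p.1 + b * p.2) ⁻¹' A) ∩ (Set.Ioi 0 ×ˢ Set.Ioi 0) with hTdef
  have hT : MeasurableSet T :=
    (((measurable_fst.const_mul a).add (measurable_snd.const_mul b)) hA).inter
      (measurableSet_Ioi.prod measurableSet_Ioi)
  rw [Measure.prod_apply hT]
  have hzero : ∀ x : ℝ,
      (ENNReal.ofReal (1 - q₂) • Measure.dirac (0:ℝ) + ENNReal.ofReal q₂ • ν₂)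
        (Prod.mk x ⁻¹' T) = 0 := by
    intro x
    have hsub1 : Prod.mk x ⁻¹' T ⊆ Set.Ioi (0:ℝ) := by
      intro y hy; exact hy.2.2
    have hsub2 : Prod.mk x ⁻¹' T ⊆ {y | a * x + b * y ∈ A} := by
      intro y hy; exact hy.1
    have hd : Measure.dirac (0:ℝ) (Prod.mk x ⁻¹' T) = 0 :=
      measure_mono_null hsub1 (by simp [Measure.dirac_apply' _ measurableSet_Ioi])
    have hn : ν₂ (Prod.mk x ⁻¹' T) = 0 := by
      refine measure_mono_null hsub2 (hν₂ac ?_)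
      have : {y : ℝ | a * x + b * y ∈ A}
          = (fun y : ℝ => b * y) ⁻¹' ((fun z : ℝ => a * x + z) ⁻¹' A) := rfl
      rw [this, Real.volume_preimage_mul_left hb.ne',
        measure_preimage_add _ _ _, hA0, mul_zero]
    simp [Measure.add_apply, hd, hn]
  simp [hzero]

/-- Let `κ > 1`, `c ∈ {0,1}`, and let `Y⁽¹⁾, Y⁽²⁾` be independent real random
variables whose laws are `(1-qᵢ)·δ₀ + qᵢ·νᵢ` with `qᵢ ∈ (0,1]` and `νᵢ` a probability
measure on `(0,∞)` absolutely continuous w.r.t. Lebesgue measure. For positive values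
the minimum `M = min_{t∈ℤ} (κ^t Y⁽¹⁾ + κ^{c-t} Y⁽²⁾)` is attained, and the conditional
law of `M` given `{Y⁽¹⁾ > 0, Y⁽²⁾ > 0}` is absolutely continuous w.r.t. Lebesgue
measure. -/
theorem stmt_12
    (κ : ℝ) (hκ : 1 < κ) (c : ℤ) (hc : c = 0 ∨ c = 1)
    (Ω : Type) [MeasurableSpace Ω] (P : Measure Ω) [IsProbabilityMeasure P]
    (Y₁ Y₂ : Ω → ℝ) (hY₁ : Measurable Y₁) (hY₂ : Measurable Y₂)
    (hindep : IndepFun Y₁ Y₂ P)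
    (q₁ q₂ : ℝ) (hq₁0 : 0 < q₁) (hq₁1 : q₁ ≤ 1) (hq₂0 : 0 < q₂) (hq₂1 : q₂ ≤ 1)
    (ν₁ ν₂ : Measure ℝ) (hν₁p : IsProbabilityMeasure ν₁) (hν₂p : IsProbabilityMeasure ν₂)
    (hν₁pos : ν₁ (Set.Iic 0) = 0) (hν₂pos : ν₂ (Set.Iic 0) = 0)
    (hν₁ac : ν₁ ≪ (volume : Measure ℝ)) (hν₂ac : ν₂ ≪ (volume : Measure ℝ))
    (hlaw₁ : Measure.map Y₁ P =
      ENNReal.ofReal (1 - q₁) • Measure.dirac (0 : ℝ) + ENNReal.ofReal q₁ • ν₁)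
    (hlaw₂ : Measure.map Y₂ P =
      ENNReal.ofReal (1 - q₂) • Measure.dirac (0 : ℝ) + ENNReal.ofReal q₂ • ν₂) :
    (∀ ω, 0 < Y₁ ω → 0 < Y₂ ω → ∃ t : ℤ, ∀ s : ℤ,
      κ ^ t * Y₁ ω + κ ^ (c - t) * Y₂ ω ≤ κ ^ s * Y₁ ω + κ ^ (c - s) * Y₂ ω) ∧
    Measure.map (fun ω => ⨅ t : ℤ, (κ ^ t * Y₁ ω + κ ^ (c - t) * Y₂ ω))
        (ProbabilityTheory.cond P {ω | 0 < Y₁ ω ∧ 0 < Y₂ ω}) ≪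
      (volume : Measure ℝ) := by
  have hc0 : (0:ℤ) ≤ c := by rcases hc with rfl | rfl <;> norm_num
  have hmin : ∀ ω, 0 < Y₁ ω → 0 < Y₂ ω → ∃ t : ℤ, ∀ s : ℤ,
      κ ^ t * Y₁ ω + κ ^ (c - t) * Y₂ ω ≤ κ ^ s * Y₁ ω + κ ^ (c - s) * Y₂ ω :=
    fun ω h1 h2 => min_attained' κ hκ c hc0 _ _ h1 h2
  refine ⟨hmin, ?_⟩
  set S : Set Ω := {ω | 0 < Y₁ ω ∧ 0 < Y₂ ω} with hSdef
  have hS : MeasurableSet S := (hY₁ measurableSet_Ioi).inter (hY₂ measurableSet_Ioi)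
  set M : Ω → ℝ := fun ω => ⨅ t : ℤ, (κ ^ t * Y₁ ω + κ ^ (c - t) * Y₂ ω) with hMdef
  have hM : Measurable M :=
    Measurable.iInf fun t => (hY₁.const_mul _).add (hY₂.const_mul _)
  refine Measure.AbsolutelyContinuous.mk fun A hA hA0 => ?_
  rw [Measure.map_apply hM hA, cond_apply hS]
  suffices h0 : P (S ∩ M ⁻¹' A) = 0 by rw [h0, mul_zero]
  set T : ℤ → Set (ℝ × ℝ) := fun t =>
    ((fun p : ℝ × ℝ => κ ^ t * p.1 + κ ^ (c - t) * p.2) ⁻¹' A) ∩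
      (Set.Ioi 0 ×ˢ Set.Ioi 0) with hTdef
  have hsub : S ∩ M ⁻¹' A ⊆ ⋃ t : ℤ, (fun ω => (Y₁ ω, Y₂ ω)) ⁻¹' (T t) := by
    rintro ω ⟨⟨h1, h2⟩, hmem⟩
    obtain ⟨t, ht⟩ := hmin ω h1 h2
    have hinf : M ω = κ ^ t * Y₁ ω + κ ^ (c - t) * Y₂ ω := by
      have hbdd : BddBelow (Set.range fun s : ℤ => κ ^ s * Y₁ ω + κ ^ (c - s) * Y₂ ω) :=
        ⟨κ ^ t * Y₁ ω + κ ^ (c - t) * Y₂ ω, by rintro x ⟨s, rfl⟩; exact ht s⟩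
      exact le_antisymm (ciInf_le hbdd t) (le_ciInf ht)
    refine Set.mem_iUnion.2 ⟨t, ?_, h1, h2⟩
    show κ ^ t * Y₁ ω + κ ^ (c - t) * Y₂ ω ∈ A
    rw [← hinf]; exact hmem
  refine measure_mono_null hsub (measure_iUnion_null fun t => ?_)
  have hpair : Measurable fun ω => (Y₁ ω, Y₂ ω) := hY₁.prodMk hY₂
  have hTt : MeasurableSet (T t) :=
    (((measurable_fst.const_mul _).add (measurable_snd.const_mul _)) hA).inter
      (measurableSet_Ioi.prod measurableSet_Ioi)
  have hκ0 : (0:ℝ) < κ := lt_trans one_pos hκ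
  rw [← Measure.map_apply hpair hTt,
    (indepFun_iff_map_prod_eq_prod_map_map hY₁.aemeasurable hY₂.aemeasurable).1 hindep,
    hlaw₁, hlaw₂]
  exact prod_null' _ _ (zpow_pos hκ0 t) (zpow_pos hκ0 (c - t)) q₁ q₂ ν₁ ν₂ hν₂ac A hA hA0
end

section
/- Let n₁, n₂ be natural numbers and M, L positive reals with M - 2n₁ ≥ L/2 and n₂ ≤ L/4. Then ∏_{i=1}^{n₁} (1 - n₂/(M - 2i + 1)) ≥ exp(-4 n₁ n₂ / L). (In particular each factor is at least 1/2, since M - 2i + 1 > L/2 ≥ 2n₂ for 1 ≤ i ≤ n₁.) -/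
open scoped BigOperators

/-- Let `n₁, n₂` be natural numbers and `M, L` positive reals with `M - 2n₁ ≥ L/2`
and `n₂ ≤ L/4`. Then `∏_{i=1}^{n₁} (1 - n₂/(M - 2i + 1)) ≥ exp(-4 n₁ n₂ / L)`, and
in particular each factor is at least `1/2`. -/
theorem stmt_14 (n₁ n₂ : ℕ) (M L : ℝ) (hM : 0 < M) (hL : 0 < L)
    (h1 : L / 2 ≤ M - 2 * (n₁ : ℝ)) (h2 : (n₂ : ℝ) ≤ L / 4) :
    (∀ i ∈ Finset.Icc 1 n₁, (1 : ℝ) / 2 ≤ 1 - (n₂ : ℝ) / (M - 2 * (i : ℝ) + 1)) ∧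
    Real.exp (-(4 * (n₁ : ℝ) * (n₂ : ℝ)) / L) ≤
      ∏ i ∈ Finset.Icc 1 n₁, (1 - (n₂ : ℝ) / (M - 2 * (i : ℝ) + 1)) := by
  have key : ∀ i ∈ Finset.Icc 1 n₁,
      (n₂ : ℝ) / (M - 2 * (i : ℝ) + 1) ≤ 1 / 2 ∧
      Real.exp (-(4 * (n₂ : ℝ)) / L) ≤ 1 - (n₂ : ℝ) / (M - 2 * (i : ℝ) + 1) := by
    intro i hi
    obtain ⟨hi1, hi2⟩ := Finset.mem_Icc.mp hi
    have hiR : (i : ℝ) ≤ (n₁ : ℝ) := Nat.cast_le.mpr hi2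
    have hdpos : 0 < M - 2 * (i : ℝ) + 1 := by linarith
    have hn2 : (0 : ℝ) ≤ (n₂ : ℝ) := Nat.cast_nonneg _
    have hx0 : 0 ≤ (n₂ : ℝ) / (M - 2 * (i : ℝ) + 1) := div_nonneg hn2 hdpos.le
    have hx : (n₂ : ℝ) / (M - 2 * (i : ℝ) + 1) ≤ 2 * (n₂ : ℝ) / L := by
      rw [div_le_div_iff₀ hdpos hL]
      nlinarith
    have hxh : (n₂ : ℝ) / (M - 2 * (i : ℝ) + 1) ≤ 1 / 2 := by
      calc (n₂ : ℝ) / (M - 2 * (i : ℝ) + 1) ≤ 2 * (n₂ : ℝ) / L := hx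
        _ ≤ 1 / 2 := by rw [div_le_iff₀ hL]; linarith
    refine ⟨hxh, ?_⟩
    set x := (n₂ : ℝ) / (M - 2 * (i : ℝ) + 1) with hxdef
    have h2x : Real.exp (-(2 * x)) ≤ 1 - x := by
      have h1x : 1 + 2 * x ≤ Real.exp (2 * x) := by
        linarith [Real.add_one_le_exp (2 * x)]
      have hpos : (0 : ℝ) < 1 + 2 * x := by linarith
      have hinv : (Real.exp (2 * x))⁻¹ ≤ (1 + 2 * x)⁻¹ :=
        inv_anti₀ hpos h1x
      have h2 : (1 + 2 * x)⁻¹ ≤ 1 - x := by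
        rw [inv_eq_one_div, div_le_iff₀ hpos]
        nlinarith
      calc Real.exp (-(2 * x)) = (Real.exp (2 * x))⁻¹ := by rw [Real.exp_neg]
        _ ≤ (1 + 2 * x)⁻¹ := hinv
        _ ≤ 1 - x := h2
    have hmono : Real.exp (-(4 * (n₂ : ℝ)) / L) ≤ Real.exp (-(2 * x)) := by
      apply Real.exp_le_exp.mpr
      have : 2 * x ≤ 4 * (n₂ : ℝ) / L := by
        rw [hxdef]
        calc 2 * ((n₂ : ℝ) / (M - 2 * (i : ℝ) + 1)) ≤ 2 * (2 * (n₂ : ℝ) / L) := by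
              linarith
          _ = 4 * (n₂ : ℝ) / L := by ring
      rw [neg_div]
      linarith
    linarith
  constructor
  · intro i hi
    have h := (key i hi).1
    linarith
  · calc Real.exp (-(4 * (n₁ : ℝ) * (n₂ : ℝ)) / L)
        = (Real.exp (-(4 * (n₂ : ℝ)) / L)) ^ n₁ := by
          rw [← Real.exp_nat_mul]; ring_nf
      _ = ∏ _i ∈ Finset.Icc 1 n₁, Real.exp (-(4 * (n₂ : ℝ)) / L) := by
          rw [Finset.prod_const, Nat.card_Icc]; simp
      _ ≤ ∏ i ∈ Finset.Icc 1 n₁, (1 - (n₂ : ℝ) / (M - 2 * (i : ℝ) + 1)) :=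
          Finset.prod_le_prod (fun i _ => (Real.exp_pos _).le)
            (fun i hi => (key i hi).2)
end

section
/- Let τ ∈ (2,3) and for j ≥ 1 set g_j = (-1)^{j-1}·C(τ-2, j), with distribution function G_τ(x) = ∑_{1≤j≤⌊x⌋} g_j. Then there exists a constant C > 0 such that for all sufficiently large x, x^{-(τ-2)-C/ log x} ≤ 1 - G_τ(x) ≤ x^{-(τ-2)+C/ log x}; in other words, the offspring distribution with generating function 1-(1-s)^{τ-2} satisfies Davies' condition with α = τ-2 and γ(x) = C(log x)^{-1}. -/
/-!
With `α = τ - 2`, the tail `1 - G_τ(n)` telescopes to `∏_{i < n} (1 - α/(i+1))`. Bernoulli's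
inequality `(1 + s)^α ≤ 1 + α s` bounds each factor between `(i/(i+1))^α` and
`((i+1)/(i+2))^α`, so the product lies between `(1 - α) n^{-α}` and `(n+1)^{-α}`. The constant
`1 - α` is absorbed by the correction `x^{±C/log x} = e^{±C}` with `C = -log (1 - α)`.
-/

open Finset Real

noncomputable section

def binomTail (α : ℝ) (n : ℕ) : ℝ :=
  ∏ i ∈ range n, (1 - α / ((i : ℝ) + 1))

variable {α : ℝ}

lemma one_sub_div_nonneg (hα : α ≤ 1) {t : ℝ} (ht : 0 ≤ t) : 0 ≤ 1 - α / (t + 1) := by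
  rw [sub_nonneg, div_le_one (by positivity)]
  linarith

lemma binomTail_nonneg (hα : α ≤ 1) (n : ℕ) : 0 ≤ binomTail α n :=
  prod_nonneg fun i _ => one_sub_div_nonneg hα i.cast_nonneg

lemma binomTail_succ (α : ℝ) (n : ℕ) :
    binomTail α (n + 1) = binomTail α n * (1 - α / ((n : ℝ) + 1)) :=
  prod_range_succ _ _

lemma binomTail_eq (α : ℝ) (n : ℕ) :
    binomTail α n = (-1) ^ n * ((∏ i ∈ range n, (α - 1 - (i : ℝ))) / (n.factorial : ℝ)) := by
  have hfactor : ∀ i : ℕ, 1 - α / ((i : ℝ) + 1) = -(α - 1 - i) / ((i : ℝ) + 1) := fun i => by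
    field_simp
    ring
  simp only [binomTail, hfactor, prod_div_distrib, prod_neg, card_range, mul_div_assoc]
  rw [← prod_range_add_one_eq_factorial]
  push_cast
  rfl

lemma binomTail_mul_div_succ (α : ℝ) (n : ℕ) :
    binomTail α n * (α / ((n : ℝ) + 1)) =
      (-1) ^ n * ((∏ i ∈ range (n + 1), (α - i)) / ((n + 1).factorial : ℝ)) := by
  have hshift : ∏ i ∈ range n, (α - ((i + 1 : ℕ) : ℝ)) = ∏ i ∈ range n, (α - 1 - (i : ℝ)) :=
    prod_congr rfl fun i _ => by push_cast; ring
  rw [binomTail_eq, prod_range_succ', hshift, Nat.factorial_succ]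
  push_cast
  field_simp
  ring

lemma one_sub_sum_eq_binomTail (α : ℝ) (n : ℕ) :
    1 - ∑ j ∈ Icc 1 n, (-1) ^ (j - 1) * ((∏ i ∈ range j, (α - i)) / (j.factorial : ℝ)) =
      binomTail α n := by
  induction n with
  | zero => simp [binomTail]
  | succ n ih =>
    rw [sum_Icc_succ_top (by omega), Nat.add_sub_cancel, ← binomTail_mul_div_succ,
      binomTail_succ, ← ih]
    ring

lemma rpow_le_one_sub_div (hα0 : 0 ≤ α) (hα1 : α ≤ 1) {t : ℝ} (ht : 0 ≤ t) :
    (t / (t + 1)) ^ α ≤ 1 - α / (t + 1) := by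
  have hs : -1 ≤ -(1 / (t + 1)) := by
    rw [neg_le_neg_iff, div_le_one (by positivity)]
    linarith
  have hbern := rpow_one_add_le_one_add_mul_self hs hα0 hα1
  have hbase : 1 + -(1 / (t + 1)) = t / (t + 1) := by
    field_simp
    ring
  rwa [hbase, mul_neg, mul_one_div, ← sub_eq_add_neg] at hbern

lemma one_sub_div_le_rpow (hα0 : 0 ≤ α) (hα1 : α ≤ 1) {t : ℝ} (ht : 0 ≤ t) :
    1 - α / (t + 1) ≤ ((t + 1) / (t + 2)) ^ α := by
  have hbern := rpow_one_add_le_one_add_mul_self (s := 1 / (t + 1)) (by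
    have : 0 ≤ 1 / (t + 1) := by positivity
    linarith) hα0 hα1
  have hbase : 1 + 1 / (t + 1) = ((t + 1) / (t + 2))⁻¹ := by
    field_simp
    ring
  have hpos : 0 < ((t + 1) / (t + 2)) ^ α := by positivity
  rw [hbase, inv_rpow (by positivity), inv_le_iff_one_le_mul₀ hpos, mul_one_div] at hbern
  -- `1 - a ≤ (1 - a)(1 + a) y ≤ y` for `a = α / (t + 1)`
  nlinarith [mul_le_mul_of_nonneg_left hbern (one_sub_div_nonneg hα1 ht),
    mul_nonneg (sq_nonneg (α / (t + 1))) hpos.le]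

lemma binomTail_le_rpow (hα0 : 0 ≤ α) (hα1 : α ≤ 1) (n : ℕ) :
    binomTail α n ≤ ((n : ℝ) + 1) ^ (-α) := by
  induction n with
  | zero => simp [binomTail]
  | succ n ih =>
    have hn : (0 : ℝ) < n + 1 := by positivity
    calc binomTail α (n + 1) = binomTail α n * (1 - α / ((n : ℝ) + 1)) := binomTail_succ α n
      _ ≤ ((n : ℝ) + 1) ^ (-α) * (((n : ℝ) + 1) / ((n : ℝ) + 2)) ^ α :=
          mul_le_mul ih (one_sub_div_le_rpow hα0 hα1 n.cast_nonneg)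
            (one_sub_div_nonneg hα1 n.cast_nonneg) (by positivity)
      _ = ((n + 1 : ℕ) + 1 : ℝ) ^ (-α) := by
          rw [div_rpow hn.le (by positivity), rpow_neg hn.le, rpow_neg (by positivity)]
          push_cast
          field_simp
          ring_nf

lemma mul_rpow_le_binomTail (hα0 : 0 ≤ α) (hα1 : α ≤ 1) {n : ℕ} (hn : 1 ≤ n) :
    (1 - α) * (n : ℝ) ^ (-α) ≤ binomTail α n := by
  induction n, hn using Nat.le_induction with
  | base => simp [binomTail]
  | succ n hn ih =>
    have hn0 : (0 : ℝ) < n := by exact_mod_cast hn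
    calc (1 - α) * ((n + 1 : ℕ) : ℝ) ^ (-α)
        = (1 - α) * (n : ℝ) ^ (-α) * ((n : ℝ) / ((n : ℝ) + 1)) ^ α := by
          rw [div_rpow hn0.le (by positivity), rpow_neg hn0.le, rpow_neg (by positivity)]
          push_cast
          field_simp
      _ ≤ binomTail α n * (1 - α / ((n : ℝ) + 1)) :=
          mul_le_mul ih (rpow_le_one_sub_div hα0 hα1 n.cast_nonneg) (by positivity)
            (binomTail_nonneg hα1 n)
      _ = binomTail α (n + 1) := (binomTail_succ α n).symm

lemma rpow_div_log {x : ℝ} (hx : 1 < x) (c : ℝ) : x ^ (c / log x) = exp c := by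
  rw [rpow_def_of_pos (by linarith), mul_div_cancel₀ _ (log_pos hx).ne']

end

/-- Let `τ ∈ (2,3)`, `g_j = (-1)^{j-1}·C(τ-2, j)` with distribution function
`G_τ(x) = ∑_{1≤j≤⌊x⌋} g_j`. Then there exists `C > 0` such that for all sufficiently
large `x`, `x^{-(τ-2)-C/log x} ≤ 1 - G_τ(x) ≤ x^{-(τ-2)+C/log x}`; i.e. the offspring
distribution with generating function `1-(1-s)^{τ-2}` satisfies Davies' condition with
`α = τ-2` and `γ(x) = C(log x)⁻¹`. -/
theorem stmt_19 (τ : ℝ) (hτ1 : 2 < τ) (hτ2 : τ < 3)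
    (g : ℕ → ℝ)
    (hg : ∀ j : ℕ, g j = (-1 : ℝ) ^ (j - 1) *
      ((∏ i ∈ Finset.range j, (τ - 2 - (i : ℝ))) / (Nat.factorial j : ℝ)))
    (Gτ : ℝ → ℝ)
    (hGτ : ∀ x, Gτ x = ∑ j ∈ Finset.Icc 1 ⌊x⌋₊, g j) :
    ∃ C : ℝ, 0 < C ∧ ∃ x₀ : ℝ, 1 < x₀ ∧ ∀ x : ℝ, x₀ ≤ x →
      x ^ (-(τ - 2) - C / Real.log x) ≤ 1 - Gτ x ∧
      1 - Gτ x ≤ x ^ (-(τ - 2) + C / Real.log x) := by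
  have hα : 0 < 3 - τ := by linarith
  refine ⟨-log (3 - τ), neg_pos.2 (log_neg hα (by linarith)), 2, one_lt_two, fun x hx => ?_⟩
  have hx1 : 1 < x := by linarith
  have hn : 1 ≤ ⌊x⌋₊ := Nat.le_floor (by exact_mod_cast hx1.le)
  have htail : 1 - Gτ x = binomTail (τ - 2) ⌊x⌋₊ := by
    rw [hGτ, sum_congr rfl fun j _ => hg j, one_sub_sum_eq_binomTail]
  have hcorr : exp (-log (3 - τ)) = (1 - (τ - 2))⁻¹ := by
    rw [exp_neg, exp_log hα]
    ring_nf
  rw [htail, rpow_sub (by linarith), rpow_add (by linarith), rpow_div_log hx1, hcorr]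
  constructor
  · calc x ^ (-(τ - 2)) / (1 - (τ - 2))⁻¹ = (1 - (τ - 2)) * x ^ (-(τ - 2)) := by
          rw [div_inv_eq_mul, mul_comm]
      _ ≤ (1 - (τ - 2)) * (⌊x⌋₊ : ℝ) ^ (-(τ - 2)) := by
          refine mul_le_mul_of_nonneg_left ?_ (by linarith)
          exact rpow_le_rpow_of_nonpos (by exact_mod_cast hn) (Nat.floor_le (by linarith))
            (by linarith)
      _ ≤ _ := mul_rpow_le_binomTail (by linarith) (by linarith) hn
  · calc binomTail (τ - 2) ⌊x⌋₊ ≤ ((⌊x⌋₊ : ℝ) + 1) ^ (-(τ - 2)) :=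
          binomTail_le_rpow (by linarith) (by linarith) _
      _ ≤ x ^ (-(τ - 2)) :=
          rpow_le_rpow_of_nonpos (by linarith) (Nat.lt_floor_add_one x).le (by linarith)
      _ ≤ x ^ (-(τ - 2)) * (1 - (τ - 2))⁻¹ :=
          le_mul_of_one_le_right (by positivity) (one_le_inv₀ (by linarith) |>.2 (by linarith))
end
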